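/- arXiv:2104.05360 — 5 statements merged into one kernel-verified Lean document; each statement's English description precedes it below -/
import Mathlib

section
/- Let A be a K^p × L real matrix and define H(q) = (A A^T) · q^{⊗p} for q a positive semidefinite symmetric K×K matrix, where the dot denotes the entrywise inner product of K^p × K^p matrices. Then H is nondecreasing with respect to the Loewner order: if a ≤ b are positive semidefinite then H(a) ≤ H(b). -/
/-!
Since `b = a + (b - a)`, the identity `b ⊗ y - a ⊗ x = b ⊗ (y - x) + (b - a) ⊗ x` and the
positivity of Kronecker products of positive semidefinite matrices show, by induction on `p`,
that `q ↦ q^{⊗p}` is monotone on positive semidefinite matrices. Then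
`H b - H a = ∑ᵢⱼ (A Aᵀ)ᵢⱼ (b^{⊗p} - a^{⊗p})ᵢⱼ` is the sum of the entries of a Hadamard product
of two positive semidefinite matrices, which is nonnegative by the Schur product theorem.
-/

open Matrix
open scoped Kronecker MatrixOrder ComplexOrder

/-- The `p`-fold Kronecker (tensor) power of a `K × K` matrix, with rows and
columns indexed by `Fin p → Fin K`. -/
noncomputable def kronPow {K : ℕ} (p : ℕ) (a : Matrix (Fin K) (Fin K) ℝ) :
    Matrix (Fin p → Fin K) (Fin p → Fin K) ℝ :=
  Matrix.of fun i j => ∏ n, a (i n) (j n)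

namespace Matrix

variable {𝕜 m n : Type*} [RCLike 𝕜] [Fintype m] [Fintype n]

theorem kronecker_le_kronecker {A B : Matrix m m 𝕜} {C D : Matrix n n 𝕜}
    (hA : 0 ≤ A) (hAB : A ≤ B) (hC : 0 ≤ C) (hCD : C ≤ D) : A ⊗ₖ C ≤ B ⊗ₖ D := by
  have hB : 0 ≤ B := hA.trans hAB
  have split : B ⊗ₖ D - A ⊗ₖ C = B ⊗ₖ (D - C) + (B - A) ⊗ₖ C := by
    ext; simp only [sub_apply, add_apply, kroneckerMap_apply]; ring
  rw [le_iff, split]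
  exact ((nonneg_iff_posSemidef.mp hB).kronecker hCD).add
    (hAB.kronecker (nonneg_iff_posSemidef.mp hC))

theorem PosSemidef.sum_sum_mul_nonneg {M N : Matrix n n 𝕜} (hM : M.PosSemidef)
    (hN : N.PosSemidef) : 0 ≤ ∑ i, ∑ j, M i j * N i j := by
  simpa [dotProduct, mulVec] using
    (hM.hadamard hN).dotProduct_mulVec_nonneg 1

end Matrix

section kronPow

variable {K : ℕ}

theorem kronPow_zero (q : Matrix (Fin K) (Fin K) ℝ) : kronPow 0 q = 1 := by
  ext i j
  obtain rfl := Subsingleton.elim i j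
  simp [kronPow]

theorem kronPow_succ (p : ℕ) (q : Matrix (Fin K) (Fin K) ℝ) :
    kronPow (p + 1) q =
      (q ⊗ₖ kronPow p q).submatrix (Fin.consEquiv _).symm (Fin.consEquiv _).symm := by
  ext i j
  simp [kronPow, Fin.prod_univ_succ, Fin.tail]

theorem kronPow_nonneg (p : ℕ) {a : Matrix (Fin K) (Fin K) ℝ} (ha : 0 ≤ a) :
    0 ≤ kronPow p a := by
  induction p with
  | zero => simp [kronPow_zero]
  | succ p ih =>
    rw [kronPow_succ, nonneg_iff_posSemidef]
    exact ((nonneg_iff_posSemidef.mp ha).kronecker (nonneg_iff_posSemidef.mp ih)).submatrix _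

theorem kronPow_mono (p : ℕ) {a b : Matrix (Fin K) (Fin K) ℝ} (ha : 0 ≤ a) (hab : a ≤ b) :
    kronPow p a ≤ kronPow p b := by
  induction p with
  | zero => simp [kronPow_zero]
  | succ p ih =>
    rw [kronPow_succ, kronPow_succ, le_iff]
    exact (kronecker_le_kronecker ha hab (kronPow_nonneg p ha) ih).submatrix _

end kronPow

theorem stmt_2_general (K p L : ℕ) (A : Matrix (Fin p → Fin K) (Fin L) ℝ)
    (H : Matrix (Fin K) (Fin K) ℝ → ℝ)
    (hH : ∀ q, H q = ∑ i, ∑ j, (A * A.transpose) i j * kronPow p q i j)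
    (a b : Matrix (Fin K) (Fin K) ℝ)
    (ha : a.PosSemidef) (hab : (b - a).PosSemidef) :
    H a ≤ H b := by
  have hAAt : (A * A.transpose).PosSemidef := by
    simpa using posSemidef_self_mul_conjTranspose A
  have hsum := hAAt.sum_sum_mul_nonneg (kronPow_mono p ha.nonneg hab)
  simp only [Matrix.sub_apply, mul_sub, Finset.sum_sub_distrib, sub_nonneg] at hsum
  rwa [hH, hH]

theorem stmt_2 (K p L : ℕ) (A : Matrix (Fin p → Fin K) (Fin L) ℝ)
    (H : Matrix (Fin K) (Fin K) ℝ → ℝ)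
    (hH : ∀ q, H q = ∑ i, ∑ j, (A * A.transpose) i j * kronPow p q i j)
    (a b : Matrix (Fin K) (Fin K) ℝ)
    (ha : a.PosSemidef) (hb : b.PosSemidef) (hab : (b - a).PosSemidef) :
    H a ≤ H b :=
  stmt_2_general K p L A H hH a b ha hab
end

section
/- Let f : [0,∞) × ℝ^d → ℝ be convex, let (t,x) ∈ (0,∞) × ℝ^d, and let φ be a differentiable function such that f − φ has a local maximum at (t,x). Then f is differentiable at (t,x), the subdifferential ∂f(t,x) equals the singleton {(∂_t φ(t,x), ∇φ(t,x))}, and the derivatives of f at (t,x) coincide with those of φ. -/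
/-!
Near `(t, x)` the function `f` is squeezed between two functions with derivative `Dφ(t, x)`:
from above by `f(t, x) - φ(t, x) + φ` (the local maximum), from below by
`f(t, x) + φ(t, x) - φ(2 (t, x) - ·)` (midpoint convexity, combined with the local maximum at the
reflected point). Hence `Df(t, x) = Dφ(t, x)`. At an interior point where a convex function is
differentiable, its subdifferential is `{Df}`: a subgradient `g` makes `f - g` locally minimal, so
`g = Df`, and `Df` is a subgradient by the slope inequality for `f` restricted to segments.
-/

open Set Filter Topology AffineMap

variable {E : Type*} [NormedAddCommGroup E] [NormedSpace ℝ E]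

theorem HasFDerivAt.of_eventually_le_of_eventually_le {f g h : E → ℝ} {L : E →L[ℝ] ℝ} {x : E}
    (hg : HasFDerivAt g L x) (hh : HasFDerivAt h L x) (hgx : g x = f x) (hhx : h x = f x)
    (hgf : ∀ᶠ y in 𝓝 x, g y ≤ f y) (hfh : ∀ᶠ y in 𝓝 x, f y ≤ h y) : HasFDerivAt f L x := by
  rw [hasFDerivAt_iff_isLittleO] at hg hh ⊢
  refine (Asymptotics.IsBigO.of_bound 1 ?_).trans_isLittleO (hg.norm_left.add hh.norm_left)
  filter_upwards [hgf, hfh] with y hgy hhy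
  simp only [one_mul, Real.norm_eq_abs]
  refine (abs_le.mpr ⟨?_, ?_⟩).trans (le_abs_self _) <;> cases abs_cases (g y - g x - L (y - x)) <;>
    cases abs_cases (h y - h x - L (y - x)) <;> linarith

theorem ConvexOn.hasFDerivAt_of_isLocalMax_sub {s : Set E} {f φ : E → ℝ} {L : E →L[ℝ] ℝ}
    {x : E} (hf : ConvexOn ℝ s f) (hs : s ∈ 𝓝 x) (hφ : HasFDerivAt φ L x)
    (hmax : IsLocalMax (fun y => f y - φ y) x) : HasFDerivAt f L x := by
  set ρ : E → E := fun y => (2 : ℝ) • x - y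
  have hρx : ρ x = x := by simp only [ρ]; module
  have hρ : HasFDerivAt ρ (-ContinuousLinearMap.id ℝ E) x := (hasFDerivAt_id x).const_sub _
  have hρ_tendsto : Tendsto ρ (𝓝 x) (𝓝 x) := by simpa only [hρx] using hρ.continuousAt.tendsto
  refine HasFDerivAt.of_eventually_le_of_eventually_le
    (g := fun y => f x + φ x - φ (ρ y)) (h := fun y => f x - φ x + φ y) ?_
    (hφ.const_add _) (by simp [hρx]) (by simp) ?_ ?_
  · have h := ((by rwa [hρx] : HasFDerivAt φ L (ρ x)).comp x hρ).const_sub (f x + φ x)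
    rwa [show -(L.comp (-ContinuousLinearMap.id ℝ E)) = L by ext; simp] at h
  · filter_upwards [hs, hρ_tendsto.eventually hs, hρ_tendsto.eventually hmax]
      with y hy hρy hmaxρ
    have hmid := hf.2 hy hρy (by norm_num : (0 : ℝ) ≤ 1 / 2) (by norm_num : (0 : ℝ) ≤ 1 / 2)
      (by norm_num)
    rw [show (1 / 2 : ℝ) • y + (1 / 2 : ℝ) • ρ y = x by simp only [ρ]; module,
      smul_eq_mul, smul_eq_mul] at hmid
    change f (ρ y) - φ (ρ y) ≤ f x - φ x at hmaxρ
    linarith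
  · filter_upwards [hmax] with y hy
    linarith

theorem ConvexOn.add_fderiv_le {s : Set E} {f : E → ℝ} {L : E →L[ℝ] ℝ} {x y : E}
    (hf : ConvexOn ℝ s f) (hx : x ∈ s) (hy : y ∈ s) (hfx : HasFDerivAt f L x) :
    f x + L (y - x) ≤ f y := by
  have hconv : ConvexOn ℝ (lineMap (k := ℝ) x y ⁻¹' s) (f ∘ lineMap (k := ℝ) x y) :=
    hf.comp_affineMap _
  have hderiv : HasDerivAt (f ∘ lineMap (k := ℝ) x y) (L (y - x)) 0 :=
    hfx.comp_hasDerivAt_of_eq 0 hasDerivAt_lineMap (lineMap_apply_zero x y).symm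
  have := hconv.le_slope_of_hasDerivAt (by simpa) (by simpa) one_pos hderiv
  simp only [slope_def_field, Function.comp_apply, lineMap_apply_one, lineMap_apply_zero,
    sub_zero, div_one] at this
  linarith

def subdifferential (s : Set E) (f : E → ℝ) (x : E) : Set (E →L[ℝ] ℝ) :=
  {g | ∀ y ∈ s, f x + g (y - x) ≤ f y}

theorem ConvexOn.subdifferential_eq_singleton {s : Set E} {f : E → ℝ} {L : E →L[ℝ] ℝ} {x : E}
    (hf : ConvexOn ℝ s f) (hs : s ∈ 𝓝 x) (hfx : HasFDerivAt f L x) :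
    subdifferential s f x = {L} := by
  ext g
  refine ⟨fun hg => ?_, fun hg => ?_⟩
  · have hmin : IsLocalMin (fun y => f y - g y) x := by
      filter_upwards [hs] with y hy
      have := hg y hy
      rw [map_sub] at this
      linarith
    exact (sub_eq_zero.mp (hmin.hasFDerivAt_eq_zero (hfx.sub g.hasFDerivAt))).symm
  · rw [mem_singleton_iff.mp hg]
    exact fun y hy => hf.add_fderiv_le (mem_of_mem_nhds hs) hy hfx

theorem stmt_5 (d : ℕ) (f φ : ℝ × EuclideanSpace ℝ (Fin d) → ℝ)
    (hf : ConvexOn ℝ {z : ℝ × EuclideanSpace ℝ (Fin d) | 0 ≤ z.1} f)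
    (hφ : Differentiable ℝ φ)
    (t : ℝ) (ht : 0 < t) (x : EuclideanSpace ℝ (Fin d))
    (hmax : ∀ᶠ z in nhds (t, x), f z - φ z ≤ f (t, x) - φ (t, x)) :
    HasFDerivAt f (fderiv ℝ φ (t, x)) (t, x) ∧
      ∀ (a : ℝ) (p : EuclideanSpace ℝ (Fin d)),
        (∀ (t' : ℝ) (x' : EuclideanSpace ℝ (Fin d)), 0 ≤ t' →
            f (t, x) + a * (t' - t) + (inner ℝ p (x' - x) : ℝ) ≤ f (t', x')) ↔
          ∀ (v : ℝ × EuclideanSpace ℝ (Fin d)),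
            a * v.1 + (inner ℝ p v.2 : ℝ) = fderiv ℝ φ (t, x) v := by
  have hs : {z : ℝ × EuclideanSpace ℝ (Fin d) | 0 ≤ z.1} ∈ 𝓝 (t, x) :=
    (continuous_fst.tendsto (t, x)).eventually (eventually_ge_nhds ht)
  have hfx := hf.hasFDerivAt_of_isLocalMax_sub hs (hφ (t, x)).hasFDerivAt hmax
  refine ⟨hfx, fun a p => ?_⟩
  set g : ℝ × EuclideanSpace ℝ (Fin d) →L[ℝ] ℝ :=
    a • ContinuousLinearMap.fst ℝ ℝ _ + (innerSL ℝ p).comp (ContinuousLinearMap.snd ℝ ℝ _)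
  have hg : ∀ v, g v = a * v.1 + inner ℝ p v.2 := fun v => rfl
  have key : g ∈ subdifferential {z | 0 ≤ z.1} f (t, x) ↔ g = fderiv ℝ φ (t, x) := by
    rw [hf.subdifferential_eq_singleton hs hfx, mem_singleton_iff]
  simp only [subdifferential, mem_ofPred_eq, ContinuousLinearMap.ext_iff, hg, Prod.forall,
    Prod.mk_sub_mk] at key
  simpa only [add_assoc, Prod.forall] using key
end

section
/- Let f : ℝ^d → ℝ be convex and bounded below by an affine function y ↦ c + y·p, and for ε > 0 let y_ε be a minimizer of y ↦ f(y) + ε√(1+|y|²) − y·p (such a minimizer exists). Then ε√(1+|y_ε|²) → 0 as ε → 0, and the unperturbed infimum satisfies limsup_{ε→0} inf_y (f(y) + ε√(1+|y|²) − y·p) = inf_y (f(y) − y·p). -/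
/-!
Write `g y = f y - ⟪y, p⟫`, which is bounded below by `c`, and `w y = √(1 + ‖y‖²) ≥ 0`.
The perturbed infimum `⨅ y, g y + ε w y` lies above `⨅ g` and, for each fixed `y`, below
`g y + ε w y → g y`; hence it tends to `⨅ g`. At a minimizer `y_ε`,
`ε w y_ε = (⨅ y, g y + ε w y) - g y_ε ≤ (⨅ y, g y + ε w y) - ⨅ g → 0`.
-/

open Set Filter Topology

section PenalizedInfimum

variable {α : Type*} {g w : α → ℝ}

lemma iInf_le_iInf_add_mul (hg : BddBelow (range g)) (hw : ∀ y, 0 ≤ w y) {ε : ℝ}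
    (hε : 0 ≤ ε) : ⨅ y, g y ≤ ⨅ y, (g y + ε * w y) :=
  ciInf_mono hg fun y => le_add_of_nonneg_right (mul_nonneg hε (hw y))

lemma bddBelow_range_add_mul (hg : BddBelow (range g)) (hw : ∀ y, 0 ≤ w y) {ε : ℝ}
    (hε : 0 ≤ ε) : BddBelow (range fun y => g y + ε * w y) := by
  obtain ⟨c, hc⟩ := hg
  refine ⟨c, ?_⟩
  rintro _ ⟨y, rfl⟩
  exact (hc ⟨y, rfl⟩).trans (le_add_of_nonneg_right (mul_nonneg hε (hw y)))

lemma tendsto_iInf_add_mul_nhdsGT_zero [Nonempty α] (hg : BddBelow (range g))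
    (hw : ∀ y, 0 ≤ w y) :
    Tendsto (fun ε : ℝ => ⨅ y, (g y + ε * w y)) (𝓝[>] 0) (𝓝 (⨅ y, g y)) := by
  rw [tendsto_order]
  refine ⟨fun a ha => ?_, fun a ha => ?_⟩
  · filter_upwards [self_mem_nhdsWithin] with ε hε
    exact ha.trans_le (iInf_le_iInf_add_mul hg hw (le_of_lt hε))
  · obtain ⟨y, hy⟩ := exists_lt_of_ciInf_lt ha
    have hlim : Tendsto (fun ε : ℝ => g y + ε * w y) (𝓝[>] 0) (𝓝 (g y)) :=
      ((continuous_const.add (continuous_id.mul continuous_const)).tendsto' 0 (g y)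
        (by simp)).mono_left nhdsWithin_le_nhds
    filter_upwards [hlim.eventually (eventually_lt_nhds hy), self_mem_nhdsWithin]
      with ε hεy hε
    exact (ciInf_le (bddBelow_range_add_mul hg hw (le_of_lt hε)) y).trans_lt hεy

lemma tendsto_mul_minimizer_nhdsGT_zero [Nonempty α] (hg : BddBelow (range g))
    (hw : ∀ y, 0 ≤ w y) (x : ℝ → α)
    (hmin : ∀ ε : ℝ, 0 < ε → ∀ y, g (x ε) + ε * w (x ε) ≤ g y + ε * w y) :
    Tendsto (fun ε : ℝ => ε * w (x ε)) (𝓝[>] 0) (𝓝 0) := by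
  have hgap : Tendsto (fun ε : ℝ => (⨅ y, (g y + ε * w y)) - ⨅ y, g y) (𝓝[>] 0) (𝓝 0) := by
    simpa using (tendsto_iInf_add_mul_nhdsGT_zero hg hw).sub_const (⨅ y, g y)
  refine tendsto_of_tendsto_of_tendsto_of_le_of_le' tendsto_const_nhds hgap ?_ ?_
  all_goals filter_upwards [self_mem_nhdsWithin] with ε hε
  · exact mul_nonneg (le_of_lt hε) (hw _)
  · have hx : g (x ε) + ε * w (x ε) ≤ ⨅ y, (g y + ε * w y) := le_ciInf (hmin ε hε)
    have hg_le : ⨅ y, g y ≤ g (x ε) := ciInf_le hg (x ε)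
    linarith

end PenalizedInfimum

theorem stmt_7_general (d : ℕ) (f : EuclideanSpace ℝ (Fin d) → ℝ)
    (p : EuclideanSpace ℝ (Fin d)) (c : ℝ)
    (hbdd : ∀ y, c + (inner ℝ y p : ℝ) ≤ f y)
    (yε : ℝ → EuclideanSpace ℝ (Fin d))
    (hmin : ∀ ε : ℝ, 0 < ε → ∀ y,
      f (yε ε) + ε * Real.sqrt (1 + ‖yε ε‖ ^ 2) - (inner ℝ (yε ε) p : ℝ) ≤
        f y + ε * Real.sqrt (1 + ‖y‖ ^ 2) - (inner ℝ y p : ℝ)) :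
    Tendsto (fun ε : ℝ => ε * Real.sqrt (1 + ‖yε ε‖ ^ 2)) (nhdsWithin 0 (Ioi 0)) (nhds 0) ∧
      limsup (fun ε : ℝ => ⨅ y : EuclideanSpace ℝ (Fin d),
          (f y + ε * Real.sqrt (1 + ‖y‖ ^ 2) - (inner ℝ y p : ℝ)))
        (nhdsWithin 0 (Ioi 0)) =
        ⨅ y : EuclideanSpace ℝ (Fin d), (f y - (inner ℝ y p : ℝ)) := by
  set g := fun y => f y - (inner ℝ y p : ℝ)
  set w := fun y : EuclideanSpace ℝ (Fin d) => Real.sqrt (1 + ‖y‖ ^ 2)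
  have hg : BddBelow (range g) := ⟨c, by rintro _ ⟨y, rfl⟩; linarith [hbdd y]⟩
  have hw : ∀ y, 0 ≤ w y := fun y => Real.sqrt_nonneg _
  have hF : (fun ε : ℝ => ⨅ y, (f y + ε * Real.sqrt (1 + ‖y‖ ^ 2) - (inner ℝ y p : ℝ))) =
      fun ε => ⨅ y, (g y + ε * w y) := by
    funext ε
    congr 1
    funext y
    ring
  refine ⟨tendsto_mul_minimizer_nhdsGT_zero hg hw yε fun ε hε y => ?_, ?_⟩
  · linarith [hmin ε hε y]
  · rw [hF]
    exact (tendsto_iInf_add_mul_nhdsGT_zero hg hw).limsup_eq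

theorem stmt_7 (d : ℕ) (f : EuclideanSpace ℝ (Fin d) → ℝ)
    (hf : ConvexOn ℝ univ f) (p : EuclideanSpace ℝ (Fin d)) (c : ℝ)
    (hbdd : ∀ y, c + (inner ℝ y p : ℝ) ≤ f y)
    (yε : ℝ → EuclideanSpace ℝ (Fin d))
    (hmin : ∀ ε : ℝ, 0 < ε → ∀ y,
      f (yε ε) + ε * Real.sqrt (1 + ‖yε ε‖ ^ 2) - (inner ℝ (yε ε) p : ℝ) ≤
        f y + ε * Real.sqrt (1 + ‖y‖ ^ 2) - (inner ℝ y p : ℝ)) :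
    Tendsto (fun ε : ℝ => ε * Real.sqrt (1 + ‖yε ε‖ ^ 2)) (nhdsWithin 0 (Ioi 0)) (nhds 0) ∧
      limsup (fun ε : ℝ => ⨅ y : EuclideanSpace ℝ (Fin d),
          (f y + ε * Real.sqrt (1 + ‖y‖ ^ 2) - (inner ℝ y p : ℝ)))
        (nhdsWithin 0 (Ioi 0)) =
        ⨅ y : EuclideanSpace ℝ (Fin d), (f y - (inner ℝ y p : ℝ)) :=
  stmt_7_general d f p c hbdd yε hmin
end

section
/- Let f : [0,∞) × ℝ^d → ℝ be Lipschitz and convex, and suppose f satisfies ∂_t f − H(∇f) = 0 at every point of differentiability in (0,∞) × ℝ^d, where H : ℝ^d → ℝ is continuous. Then f is a viscosity subsolution: for every smooth φ and every (t,x) ∈ (0,∞) × ℝ^d at which f − φ has a local maximum, one has ∂_t φ(t,x) − H(∇φ(t,x)) = 0 (in particular ≤ 0). -/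
open Set Filter Topology MeasureTheory InnerProductSpace ContinuousLinearMap in
private theorem support_lemma' {V : Type*} [NormedAddCommGroup V] [NormedSpace ℝ V]
    {s : Set V} {f : V → ℝ} (hf : ConvexOn ℝ s f) {z w : V} (hz : z ∈ s) (hw : w ∈ s)
    {p : V →L[ℝ] ℝ} (hp : HasFDerivAt f p z) : p (w - z) ≤ f w - f z := by
  have hline : HasDerivAt (fun r : ℝ => z + r • (w - z)) (w - z) 0 := by
    simpa using ((hasDerivAt_id (0:ℝ)).smul_const (w - z)).const_add z
  have hcomp : HasDerivAt (fun r : ℝ => f (z + r • (w - z))) (p (w - z)) 0 := by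
    have := hp.comp_hasDerivAt_of_eq 0 hline (by simp)
    exact this
  have hslope : Tendsto (fun r : ℝ => (f (z + r • (w - z)) - f z) / r) (𝓝[>] 0)
      (𝓝 (p (w - z))) := by
    have h1 := (hasDerivAt_iff_tendsto_slope.mp hcomp).mono_left
      (nhdsWithin_mono _ (fun r (hr : r ∈ Ioi (0:ℝ)) => ne_of_gt hr))
    refine h1.congr (fun r => ?_)
    simp only [slope_def_field, Function.comp_apply]
    rw [zero_smul, add_zero]
    ring
  have hbound : ∀ᶠ r : ℝ in 𝓝[>] 0, (f (z + r • (w - z)) - f z) / r ≤ f w - f z := by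
    filter_upwards [Ioo_mem_nhdsGT_of_mem (by norm_num : (0:ℝ) ∈ Ico (0:ℝ) 1),
      self_mem_nhdsWithin] with r hr hrpos
    have hr0 : (0:ℝ) < r := hrpos
    have hr1 : r ≤ 1 := le_of_lt hr.2
    have hcvx := hf.2 hz hw (by linarith : (0:ℝ) ≤ 1 - r) (le_of_lt hr0) (by ring)
    have heqpt : (1 - r) • z + r • w = z + r • (w - z) := by module
    rw [heqpt] at hcvx
    rw [smul_eq_mul, smul_eq_mul] at hcvx
    rw [div_le_iff₀ hr0]
    nlinarith [hcvx]
  exact le_of_tendsto hslope hbound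

open Set Filter Topology MeasureTheory InnerProductSpace ContinuousLinearMap in
private theorem slice_deriv' {E : Type*} [NormedAddCommGroup E] [NormedSpace ℝ E]
    {u : ℝ × E → ℝ} {z : ℝ × E} {q : ℝ × E →L[ℝ] ℝ} (h : HasFDerivAt u q z) :
    deriv (fun s => u (s, z.2)) z.1 = q (1, 0) := by
  have h1 : HasDerivAt (fun s : ℝ => (s, z.2)) ((1:ℝ), (0:E)) z.1 :=
    (hasDerivAt_id z.1).prodMk (hasDerivAt_const _ _)
  have h2 : HasDerivAt (fun s : ℝ => u (s, z.2)) (q (1, 0)) z.1 := by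
    have := h.comp_hasDerivAt_of_eq z.1 h1 (by simp)
    exact this
  exact h2.deriv

open Set Filter Topology MeasureTheory InnerProductSpace ContinuousLinearMap in
private theorem slice_grad' {E : Type*} [NormedAddCommGroup E] [InnerProductSpace ℝ E]
    [CompleteSpace E] {u : ℝ × E → ℝ} {z : ℝ × E} {q : ℝ × E →L[ℝ] ℝ}
    (h : HasFDerivAt u q z) :
    gradient (fun y => u (z.1, y)) z.2
      = (toDual ℝ E).symm (q.comp (inr ℝ ℝ E)) := by
  have h1 : HasFDerivAt (fun y : E => (z.1, y)) (inr ℝ ℝ E) z.2 :=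
    hasFDerivAt_prodMk_right z.1 z.2
  have h2 : HasFDerivAt (fun y : E => u (z.1, y)) (q.comp (inr ℝ ℝ E)) z.2 := by
    have h' : HasFDerivAt u q ((fun y : E => (z.1, y)) z.2) := by simpa using h
    exact h'.comp z.2 h1
  rw [gradient, h2.fderiv]

open Set

set_option maxHeartbeats 1000000 in
open Filter Topology MeasureTheory InnerProductSpace ContinuousLinearMap in
theorem stmt_14 (d : ℕ) (L : NNReal) (f : ℝ × EuclideanSpace ℝ (Fin d) → ℝ)
    (H : EuclideanSpace ℝ (Fin d) → ℝ) (hH : Continuous H)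
    (hLip : LipschitzOnWith L f {z : ℝ × EuclideanSpace ℝ (Fin d) | 0 ≤ z.1})
    (hconv : ConvexOn ℝ {z : ℝ × EuclideanSpace ℝ (Fin d) | 0 ≤ z.1} f)
    (heq : ∀ z : ℝ × EuclideanSpace ℝ (Fin d), 0 < z.1 → DifferentiableAt ℝ f z →
      deriv (fun s => f (s, z.2)) z.1 - H (gradient (fun y => f (z.1, y)) z.2) = 0) :
    ∀ (φ : ℝ × EuclideanSpace ℝ (Fin d) → ℝ), ContDiff ℝ (⊤ : ℕ∞) φ →
      ∀ (t : ℝ) (x : EuclideanSpace ℝ (Fin d)), 0 < t →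
        IsLocalMax (fun z => f z - φ z) (t, x) →
        deriv (fun s => φ (s, x)) t - H (gradient (fun y => φ (t, y)) x) = 0 := by
  intro φ hφ t x ht hmax
  set s : Set (ℝ × EuclideanSpace ℝ (Fin d)) := {z | 0 ≤ z.1} with hs_def
  set U : Set (ℝ × EuclideanSpace ℝ (Fin d)) := {z | 0 < z.1} with hU_def
  have hU : IsOpen U := isOpen_lt continuous_const continuous_fst
  have hUs : U ⊆ s := fun z hz => show (0:ℝ) ≤ z.1 from le_of_lt hz
  have hsU : ∀ z ∈ U, s ∈ 𝓝 z := fun z hz => mem_of_superset (hU.mem_nhds hz) hUs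
  have hz₀U : ((t, x) : ℝ × EuclideanSpace ℝ (Fin d)) ∈ U := ht
  -- extend f to a global Lipschitz function
  obtain ⟨g, hgL, hgE⟩ := hLip.extend_real
  have hfg : ∀ z ∈ U, f =ᶠ[𝓝 z] g := fun z hz => eventuallyEq_of_mem (hsU z hz) hgE
  -- Rademacher
  haveI : (volume : Measure (ℝ × EuclideanSpace ℝ (Fin d))).IsAddHaarMeasure :=
    MeasureTheory.Measure.prod.instIsAddHaarMeasure volume volume
  have hae : ∀ᵐ z ∂(volume : Measure (ℝ × EuclideanSpace ℝ (Fin d))),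
      DifferentiableAt ℝ g z := hgL.ae_differentiableAt
  -- choose differentiability points approaching (t, x)
  have hex : ∀ n : ℕ, ∃ z : ℝ × EuclideanSpace ℝ (Fin d),
      z ∈ Metric.ball (t, x) ((n:ℝ)+1)⁻¹ ∧ z ∈ U ∧ DifferentiableAt ℝ g z := by
    intro n
    by_contra hcon
    push_neg at hcon
    have hWo : IsOpen (Metric.ball ((t, x) : ℝ × EuclideanSpace ℝ (Fin d)) ((n:ℝ)+1)⁻¹ ∩ U) :=
      Metric.isOpen_ball.inter hU
    have hWne : ((t, x) : ℝ × EuclideanSpace ℝ (Fin d)) ∈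
        Metric.ball ((t, x) : ℝ × EuclideanSpace ℝ (Fin d)) ((n:ℝ)+1)⁻¹ ∩ U :=
      ⟨Metric.mem_ball_self (by positivity), hz₀U⟩
    have hpos : 0 < volume (Metric.ball ((t, x) : ℝ × EuclideanSpace ℝ (Fin d)) ((n:ℝ)+1)⁻¹ ∩ U) :=
      hWo.measure_pos _ ⟨(t, x), hWne⟩
    have hsub' : (Metric.ball ((t, x) : ℝ × EuclideanSpace ℝ (Fin d)) ((n:ℝ)+1)⁻¹ ∩ U)
        ⊆ {z | ¬ DifferentiableAt ℝ g z} := fun z hz => hcon z hz.1 hz.2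
    have h0 : volume {z : ℝ × EuclideanSpace ℝ (Fin d) | ¬ DifferentiableAt ℝ g z} = 0 := hae
    exact hpos.ne' (measure_mono_null hsub' h0)
  choose z hz1 hz2 hz3 using hex
  have htend : Filter.Tendsto z atTop (𝓝 (t, x)) := by
    rw [tendsto_iff_dist_tendsto_zero]
    apply squeeze_zero (fun n => dist_nonneg) (fun n => le_of_lt (hz1 n))
    exact tendsto_one_div_add_atTop_nhds_zero_nat.congr (by intro n; rw [one_div])
  set P : ℕ → (ℝ × EuclideanSpace ℝ (Fin d) →L[ℝ] ℝ) := fun n => fderiv ℝ g (z n) with hP_def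
  have hPle : ∀ n, P n ∈ Metric.closedBall (0 : ℝ × EuclideanSpace ℝ (Fin d) →L[ℝ] ℝ) L := by
    intro n
    rw [Metric.mem_closedBall, dist_zero_right]
    exact norm_fderiv_le_of_lipschitz ℝ hgL
  obtain ⟨p, hpmem, σ, hσ, hptend⟩ :=
    (ProperSpace.isCompact_closedBall (0 : ℝ × EuclideanSpace ℝ (Fin d) →L[ℝ] ℝ) L).tendsto_subseq
      hPle
  have htend' : Filter.Tendsto (fun n => z (σ n)) atTop (𝓝 (t, x)) :=
    htend.comp hσ.tendsto_atTop
  -- f has derivative P (σ n) at z (σ n)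
  have hfd : ∀ n, HasFDerivAt f (P (σ n)) (z (σ n)) := fun n =>
    ((hz3 (σ n)).hasFDerivAt).congr_of_eventuallyEq (hfg _ (hz2 (σ n)))
  -- p is a subgradient of f at (t, x) on s
  have hzs : ∀ n, z (σ n) ∈ s := fun n => hUs (hz2 (σ n))
  have hftend : Filter.Tendsto (fun n => f (z (σ n))) atTop (𝓝 (f (t, x))) := by
    have hcw : ContinuousWithinAt f s (t, x) :=
      hLip.continuousOn.continuousWithinAt (hUs hz₀U)
    exact hcw.tendsto.comp (tendsto_nhdsWithin_of_tendsto_nhds_of_eventually_within _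
      htend' (Eventually.of_forall hzs))
  have happly : ∀ w : ℝ × EuclideanSpace ℝ (Fin d),
      Filter.Tendsto (fun n => (P (σ n)) (w - z (σ n))) atTop (𝓝 (p (w - (t, x)))) := by
    intro w
    have hcts : Continuous
        (fun q : (ℝ × EuclideanSpace ℝ (Fin d) →L[ℝ] ℝ) × (ℝ × EuclideanSpace ℝ (Fin d)) =>
          q.1 q.2) := isBoundedBilinearMap_apply.continuous
    exact (hcts.tendsto (p, w - (t, x))).comp
      (hptend.prodMk_nhds (tendsto_const_nhds.sub htend'))
  have hsub : ∀ w ∈ s, p (w - (t, x)) ≤ f w - f (t, x) := by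
    intro w hw
    refine le_of_tendsto_of_tendsto' (happly w) (tendsto_const_nhds.sub hftend) (fun n => ?_)
    exact support_lemma' hconv (hzs n) hw (hfd n)
  -- φ touches f from above: p = fderiv φ (t, x)
  have hφd : HasFDerivAt φ (fderiv ℝ φ (t, x)) (t, x) :=
    ((hφ.differentiable (by simp)) (t, x)).hasFDerivAt
  set Dφ : ℝ × EuclideanSpace ℝ (Fin d) →L[ℝ] ℝ := fderiv ℝ φ (t, x) with hDφ_def
  have hmax' : ∀ᶠ w in 𝓝 ((t, x) : ℝ × EuclideanSpace ℝ (Fin d)),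
      f w - φ w ≤ f (t, x) - φ (t, x) := hmax
  have hkey : ∀ᶠ v in 𝓝 (0 : ℝ × EuclideanSpace ℝ (Fin d)),
      p v ≤ φ ((t, x) + v) - φ (t, x) := by
    have h3 : ∀ᶠ w in 𝓝 ((t, x) : ℝ × EuclideanSpace ℝ (Fin d)),
        p (w - (t, x)) ≤ φ w - φ (t, x) := by
      filter_upwards [hmax', hU.mem_nhds hz₀U] with w hw1 hw2
      have h4 := hsub w (hUs hw2)
      linarith
    have h4 : Filter.Tendsto (fun v : ℝ × EuclideanSpace ℝ (Fin d) => (t, x) + v) (𝓝 0)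
        (𝓝 (t, x)) := by
      have hc : Continuous (fun v : ℝ × EuclideanSpace ℝ (Fin d) => (t, x) + v) :=
        continuous_const.add continuous_id
      simpa using hc.tendsto 0
    filter_upwards [h4.eventually h3] with v hv
    simpa using hv
  have hple : ∀ v : ℝ × EuclideanSpace ℝ (Fin d), p v ≤ Dφ v := by
    intro v
    have hline : HasDerivAt (fun r : ℝ => (t, x) + r • v) v 0 := by
      simpa using ((hasDerivAt_id (0:ℝ)).smul_const v).const_add ((t, x) : ℝ × EuclideanSpace ℝ (Fin d))
    have hψ : HasDerivAt (fun r : ℝ => φ ((t, x) + r • v)) (Dφ v) 0 := by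
      have := hφd.comp_hasDerivAt_of_eq 0 hline (by simp)
      exact this
    have hslope : Filter.Tendsto (fun r : ℝ => (φ ((t, x) + r • v) - φ (t, x)) / r) (𝓝[>] 0)
        (𝓝 (Dφ v)) := by
      have h1 := (hasDerivAt_iff_tendsto_slope.mp hψ).mono_left
        (nhdsWithin_mono _ (fun r (hr : r ∈ Ioi (0:ℝ)) => ne_of_gt hr))
      refine h1.congr (fun r => ?_)
      simp only [slope_def_field, Function.comp_apply]
      rw [zero_smul, add_zero]
      ring
    have hsmall : Filter.Tendsto (fun r : ℝ => r • v) (𝓝[>] (0:ℝ))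
        (𝓝 (0 : ℝ × EuclideanSpace ℝ (Fin d))) := by
      have hc : Continuous (fun r : ℝ => r • v) := continuous_id.smul continuous_const
      have h0 := hc.tendsto 0
      rw [zero_smul] at h0
      exact h0.mono_left nhdsWithin_le_nhds
    have hev : ∀ᶠ r : ℝ in 𝓝[>] 0, p v ≤ (φ ((t, x) + r • v) - φ (t, x)) / r := by
      filter_upwards [hsmall.eventually hkey, self_mem_nhdsWithin] with r hr hrpos
      have hr0 : (0:ℝ) < r := hrpos
      have hps : p (r • v) = r * p v := by
        rw [ContinuousLinearMap.map_smul, smul_eq_mul]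
      rw [hps] at hr
      rw [le_div_iff₀ hr0]
      linarith [hr]
    exact ge_of_tendsto hslope hev
  have hpD : p = Dφ := by
    refine ContinuousLinearMap.ext fun v => ?_
    refine le_antisymm (hple v) ?_
    have h := hple (-v)
    rw [ContinuousLinearMap.map_neg, ContinuousLinearMap.map_neg] at h
    linarith
  -- pass the equation to the limit
  set Φ : (ℝ × EuclideanSpace ℝ (Fin d) →L[ℝ] ℝ) → ℝ := fun q =>
    q (1, 0) - H ((toDual ℝ (EuclideanSpace ℝ (Fin d))).symm
      (q.comp (inr ℝ ℝ (EuclideanSpace ℝ (Fin d))))) with hΦ_def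
  have hΦc : Continuous Φ := by
    have c0 : Continuous fun q : ℝ × EuclideanSpace ℝ (Fin d) →L[ℝ] ℝ =>
        q.comp (inr ℝ ℝ (EuclideanSpace ℝ (Fin d))) :=
      ((ContinuousLinearMap.compL ℝ (EuclideanSpace ℝ (Fin d))
        (ℝ × EuclideanSpace ℝ (Fin d)) ℝ).flip (inr ℝ ℝ (EuclideanSpace ℝ (Fin d)))).continuous
    have c1 : Continuous fun q : ℝ × EuclideanSpace ℝ (Fin d) →L[ℝ] ℝ => q (1, 0) :=
      isBoundedBilinearMap_apply.continuous.comp (continuous_id.prodMk continuous_const)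
    exact c1.sub (hH.comp ((LinearIsometryEquiv.continuous _).comp c0))
  have hzero : ∀ n, Φ (P (σ n)) = 0 := by
    intro n
    have h1 := heq (z (σ n)) (hz2 (σ n)) (hfd n).differentiableAt
    rw [slice_deriv' (hfd n), slice_grad' (hfd n)] at h1
    exact h1
  have hlim : Filter.Tendsto (fun n => Φ (P (σ n))) atTop (𝓝 (Φ p)) :=
    (hΦc.tendsto p).comp hptend
  have hΦp : Φ p = 0 := by
    have h2 : Filter.Tendsto (fun n => Φ (P (σ n))) atTop (𝓝 0) := by
      simpa [hzero] using (tendsto_const_nhds : Filter.Tendsto (fun _ : ℕ => (0:ℝ)) atTop _)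
    exact tendsto_nhds_unique hlim h2
  have e1 : deriv (fun s => φ (s, x)) t = Dφ (1, 0) := slice_deriv' hφd
  have e2 : gradient (fun y => φ (t, y)) x
      = (toDual ℝ (EuclideanSpace ℝ (Fin d))).symm
        (Dφ.comp (inr ℝ ℝ (EuclideanSpace ℝ (Fin d)))) := slice_grad' hφd
  rw [e1, e2]
  have hfin := hΦp
  rw [hpD] at hfin
  exact hfin
end

section
/- Fix t > 0 and Lipschitz convex nondecreasing functions ψ_1,...,ψ_K : [0,∞) → ℝ. Then sup over x' ∈ ℝ^K_+ and inf over x ∈ ℝ^K_+ of the quantity Σ_{k=1}^K ψ_k(x_k) − x·x' + t Σ_{k=1}^{K−1} x'_k x'_{k+1} can be rewritten by separating odd and even indices: it equals sup over the odd coordinates x'_o, inf over the odd coordinates x_o of Σ_{k odd}(ψ_k(x_k) − x_k x'_k) + Σ_{k even} ψ_k(t x'_{k−1} + t x'_{k+1}), where x'_{K+1} := 0. -/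
open Set Finset

lemma sum_cross (t : ℝ) (K : ℕ) (v : ℕ → ℝ) :
    t * ∑ j ∈ Finset.Icc 1 (K - 1), v j * v (j + 1)
      = ∑ k ∈ (Finset.Icc 1 K).filter (fun k => k % 2 = 0),
          v k * (t * v (k - 1) + t * (if k + 1 ≤ K then v (k + 1) else 0)) := by
  simp only [Finset.sum_filter]
  induction K with
  | zero => simp
  | succ n ih =>
    rcases n with _ | m
    · simp
    · have h1 : (1:ℕ) ≤ m + 1 := le_add_self
      rw [Nat.add_sub_cancel] at *
      rw [Finset.sum_Icc_succ_top h1, Finset.sum_Icc_succ_top (by omega : (1:ℕ) ≤ m + 2)]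
      rcases Nat.even_or_odd m with hm | hm
      · have hm2 : m % 2 = 0 := Nat.even_iff.mp hm
        have e1 : ∑ k ∈ Finset.Icc 1 (m+1), (if k % 2 = 0 then
              v k * (t * v (k - 1) + t * (if k + 1 ≤ m + 1 + 1 then v (k + 1) else 0)) else 0)
            = ∑ k ∈ Finset.Icc 1 (m+1), (if k % 2 = 0 then
              v k * (t * v (k - 1) + t * (if k + 1 ≤ m + 1 then v (k + 1) else 0)) else 0) := by
          refine Finset.sum_congr rfl fun k hk => ?_
          rw [Finset.mem_Icc] at hk
          split_ifs with h h2 h3 <;> first | rfl | omega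
        rw [e1, ← ih]
        rw [if_pos (by omega : (m + 1 + 1) % 2 = 0), if_neg (by omega : ¬ m + 1 + 1 + 1 ≤ m + 1 + 1),
          Nat.add_sub_cancel]
        ring
      · have hm2 : m % 2 = 1 := Nat.odd_iff.mp hm
        rw [Finset.sum_Icc_succ_top h1] at ih ⊢
        have e1 : ∑ k ∈ Finset.Icc 1 m, (if k % 2 = 0 then
              v k * (t * v (k - 1) + t * (if k + 1 ≤ m + 1 + 1 then v (k + 1) else 0)) else 0)
            = ∑ k ∈ Finset.Icc 1 m, (if k % 2 = 0 then
              v k * (t * v (k - 1) + t * (if k + 1 ≤ m + 1 then v (k + 1) else 0)) else 0) := by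
          refine Finset.sum_congr rfl fun k hk => ?_
          rw [Finset.mem_Icc] at hk
          split_ifs with h h2 h3 <;> first | rfl | omega
        rw [e1]
        rw [if_pos (by omega : (m + 1) % 2 = 0), if_pos (le_refl (m+1+1)),
          if_neg (by omega : ¬ (m+1+1) % 2 = 0), Nat.add_sub_cancel]
        rw [if_pos (by omega : (m + 1) % 2 = 0), if_neg (by omega : ¬ m + 1 + 1 ≤ m + 1),
          Nat.add_sub_cancel] at ih
        linear_combination ih


lemma subgrad {ψ : ℝ → ℝ} (hconv : ConvexOn ℝ (Ici (0:ℝ)) ψ)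
    (hmono : MonotoneOn ψ (Ici (0:ℝ))) {a : ℝ} (ha : 0 ≤ a) :
    ∃ y : ℝ, 0 ≤ y ∧ ∀ x : ℝ, 0 ≤ x → ψ a + y * (x - a) ≤ ψ x := by
  rcases eq_or_lt_of_le ha with rfl | ha'
  · exact ⟨0, le_refl 0, fun x hx => by
      simpa using hmono (mem_Ici.mpr (le_refl 0)) (mem_Ici.mpr hx) hx⟩
  · set S : Set ℝ := (fun u => (ψ a - ψ u) / (a - u)) '' (Ico 0 a) with hS
    have hne : S.Nonempty := ⟨_, ⟨0, ⟨le_refl 0, ha'⟩, rfl⟩⟩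
    have hslope : ∀ u ∈ Ico (0:ℝ) a, ∀ z, a < z →
        (ψ a - ψ u) / (a - u) ≤ (ψ z - ψ a) / (z - a) := by
      intro u hu z hz
      exact hconv.slope_mono_adjacent (mem_Ici.mpr hu.1)
        (mem_Ici.mpr (ha.trans hz.le)) hu.2 hz
    have hbdd : BddAbove S := by
      refine ⟨(ψ (a+1) - ψ a) / (a + 1 - a), ?_⟩
      rintro s ⟨u, hu, rfl⟩
      exact hslope u hu (a+1) (lt_add_one a)
    refine ⟨sSup S, ?_, ?_⟩
    · refine le_csSup_of_le hbdd ⟨0, ⟨le_refl 0, ha'⟩, rfl⟩ ?_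
      have := hmono (mem_Ici.mpr (le_refl 0)) (mem_Ici.mpr ha) ha
      apply div_nonneg <;> linarith
    · intro x hx
      rcases lt_trichotomy x a with h | rfl | h
      · have hmem : (ψ a - ψ x) / (a - x) ∈ S := ⟨x, ⟨hx, h⟩, rfl⟩
        have hle : (ψ a - ψ x) / (a - x) ≤ sSup S := le_csSup hbdd hmem
        have hax : 0 < a - x := by linarith
        nlinarith [(div_le_iff₀ hax).mp hle]
      · simp
      · have hle : sSup S ≤ (ψ x - ψ a) / (x - a) := by
          refine csSup_le hne ?_
          rintro s ⟨u, hu, rfl⟩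
          exact hslope u hu x h
        have hax : 0 < x - a := by linarith
        nlinarith [(le_div_iff₀ hax).mp hle]

lemma split_sum (K : ℕ) (f : ℕ → ℝ) :
    ∑ k ∈ Finset.Icc 1 K, f k
      = ∑ k ∈ (Finset.Icc 1 K).filter (fun k => k % 2 = 1), f k
        + ∑ k ∈ (Finset.Icc 1 K).filter (fun k => k % 2 = 0), f k := by
  rw [← Finset.sum_filter_add_sum_filter_not (Finset.Icc 1 K) (fun k => k % 2 = 1)]
  congr 2
  exact Finset.filter_congr fun k _ => by omega

theorem stmt_19 (K : ℕ) (t : ℝ) (ht : 0 < t) (ψ : ℕ → ℝ → ℝ)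
    (hconv : ∀ k, ConvexOn ℝ (Ici (0 : ℝ)) (ψ k))
    (hmono : ∀ k, MonotoneOn (ψ k) (Ici (0 : ℝ)))
    (hlip : ∀ k, ∃ L : NNReal, LipschitzOnWith L (ψ k) (Ici (0 : ℝ))) :
    (⨆ x' : {v : ℕ → ℝ // ∀ j, 0 ≤ v j}, ⨅ x : {v : ℕ → ℝ // ∀ j, 0 ≤ v j},
        ((∑ k ∈ Finset.Icc 1 K, ψ k (x.1 k) - ∑ k ∈ Finset.Icc 1 K, x.1 k * x'.1 k
          + t * ∑ k ∈ Finset.Icc 1 (K - 1), x'.1 k * x'.1 (k + 1) : ℝ) : EReal)) =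
      ⨆ x' : {v : ℕ → ℝ // ∀ j, 0 ≤ v j}, ⨅ x : {v : ℕ → ℝ // ∀ j, 0 ≤ v j},
        ((∑ k ∈ (Finset.Icc 1 K).filter (fun k => k % 2 = 1),
            (ψ k (x.1 k) - x.1 k * x'.1 k)
          + ∑ k ∈ (Finset.Icc 1 K).filter (fun k => k % 2 = 0),
            ψ k (t * x'.1 (k - 1) + t * (if k + 1 ≤ K then x'.1 (k + 1) else 0)) : ℝ)
          : EReal) := by
  apply le_antisymm
  · -- LHS ≤ RHS
    refine iSup_le fun x' => le_iSup_of_le x' (le_iInf fun x => ?_)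
    set A : ℕ → ℝ := fun k => t * x'.1 (k - 1) + t * (if k + 1 ≤ K then x'.1 (k + 1) else 0)
      with hA
    have hApos : ∀ k, 0 ≤ A k := by
      intro k
      have h1 := x'.2 (k - 1); have h2 := x'.2 (k + 1)
      dsimp only [A]; split_ifs <;> positivity
    refine iInf_le_of_le ⟨fun j => if j % 2 = 1 then x.1 j else A j, fun j => by
      dsimp only; split_ifs; exacts [x.2 j, hApos j]⟩ ?_
    rw [EReal.coe_le_coe_iff]
    apply le_of_eq
    dsimp only
    rw [split_sum K (fun k => ψ k (if k % 2 = 1 then x.1 k else A k)),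
        split_sum K (fun k => (if k % 2 = 1 then x.1 k else A k) * x'.1 k)]
    have h1 : ∑ k ∈ (Finset.Icc 1 K).filter (fun k => k % 2 = 1),
        ψ k (if k % 2 = 1 then x.1 k else A k)
        = ∑ k ∈ (Finset.Icc 1 K).filter (fun k => k % 2 = 1), ψ k (x.1 k) :=
      Finset.sum_congr rfl fun k hk => by rw [if_pos (Finset.mem_filter.mp hk).2]
    have h2 : ∑ k ∈ (Finset.Icc 1 K).filter (fun k => k % 2 = 0),
        ψ k (if k % 2 = 1 then x.1 k else A k)
        = ∑ k ∈ (Finset.Icc 1 K).filter (fun k => k % 2 = 0), ψ k (A k) :=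
      Finset.sum_congr rfl fun k hk => by
        rw [if_neg (by have := (Finset.mem_filter.mp hk).2; omega)]
    have h3 : ∑ k ∈ (Finset.Icc 1 K).filter (fun k => k % 2 = 1),
        (if k % 2 = 1 then x.1 k else A k) * x'.1 k
        = ∑ k ∈ (Finset.Icc 1 K).filter (fun k => k % 2 = 1), x.1 k * x'.1 k :=
      Finset.sum_congr rfl fun k hk => by rw [if_pos (Finset.mem_filter.mp hk).2]
    have h4 : ∑ k ∈ (Finset.Icc 1 K).filter (fun k => k % 2 = 0),
        (if k % 2 = 1 then x.1 k else A k) * x'.1 k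
        = ∑ k ∈ (Finset.Icc 1 K).filter (fun k => k % 2 = 0), x'.1 k * A k :=
      Finset.sum_congr rfl fun k hk => by
        rw [if_neg (by have := (Finset.mem_filter.mp hk).2; omega), mul_comm]
    have hcross := sum_cross t K x'.1
    rw [h1, h2, h3, h4, hcross, Finset.sum_sub_distrib]
    ring
  · -- RHS ≤ LHS
    refine iSup_le fun x'' => ?_
    set a : ℕ → ℝ := fun k => t * x''.1 (k - 1) + t * (if k + 1 ≤ K then x''.1 (k + 1) else 0)
      with ha
    have hapos : ∀ k, 0 ≤ a k := by
      intro k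
      have h1 := x''.2 (k - 1); have h2 := x''.2 (k + 1)
      dsimp only [a]; split_ifs <;> positivity
    choose y hy0 hy using fun k => subgrad (hconv k) (hmono k) (hapos k)
    refine le_iSup_of_le ⟨fun j => if j % 2 = 1 then x''.1 j else y j, fun j => by
      dsimp only; split_ifs; exacts [x''.2 j, hy0 j]⟩ (le_iInf fun x => iInf_le_of_le x ?_)
    rw [EReal.coe_le_coe_iff]
    dsimp only
    rw [split_sum K (fun k => ψ k (x.1 k)),
        split_sum K (fun k => x.1 k * (if k % 2 = 1 then x''.1 k else y k))]
    have h3 : ∑ k ∈ (Finset.Icc 1 K).filter (fun k => k % 2 = 1),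
        x.1 k * (if k % 2 = 1 then x''.1 k else y k)
        = ∑ k ∈ (Finset.Icc 1 K).filter (fun k => k % 2 = 1), x.1 k * x''.1 k :=
      Finset.sum_congr rfl fun k hk => by rw [if_pos (Finset.mem_filter.mp hk).2]
    have h4 : ∑ k ∈ (Finset.Icc 1 K).filter (fun k => k % 2 = 0),
        x.1 k * (if k % 2 = 1 then x''.1 k else y k)
        = ∑ k ∈ (Finset.Icc 1 K).filter (fun k => k % 2 = 0), x.1 k * y k :=
      Finset.sum_congr rfl fun k hk => by
        rw [if_neg (by have := (Finset.mem_filter.mp hk).2; omega)]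
    have hcross := sum_cross t K (fun j => if j % 2 = 1 then x''.1 j else y j)
    have hcross2 : ∑ k ∈ (Finset.Icc 1 K).filter (fun k => k % 2 = 0),
        (if k % 2 = 1 then x''.1 k else y k) *
          (t * (if (k-1) % 2 = 1 then x''.1 (k-1) else y (k-1))
            + t * (if k + 1 ≤ K then (if (k+1) % 2 = 1 then x''.1 (k+1) else y (k+1)) else 0))
        = ∑ k ∈ (Finset.Icc 1 K).filter (fun k => k % 2 = 0), y k * a k := by
      refine Finset.sum_congr rfl fun k hk => ?_
      have hk2 := Finset.mem_filter.mp hk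
      have hk3 := Finset.mem_Icc.mp hk2.1
      have hke : k % 2 = 0 := hk2.2
      rw [if_neg (by omega), if_pos (by omega : (k-1) % 2 = 1)]
      dsimp only [a]
      by_cases h : k + 1 ≤ K
      · rw [if_pos h, if_pos h, if_pos (by omega : (k+1) % 2 = 1)]
      · rw [if_neg h, if_neg h]
    rw [hcross2] at hcross
    rw [h3, h4, hcross, Finset.sum_sub_distrib]
    have hterm : ∑ k ∈ (Finset.Icc 1 K).filter (fun k => k % 2 = 0), ψ k (a k)
        ≤ ∑ k ∈ (Finset.Icc 1 K).filter (fun k => k % 2 = 0),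
            (ψ k (x.1 k) - x.1 k * y k + y k * a k) := by
      refine Finset.sum_le_sum fun k _ => ?_
      have := hy k (x.1 k) (x.2 k)
      nlinarith [this]
    rw [Finset.sum_add_distrib, Finset.sum_sub_distrib] at hterm
    linarith
end
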